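/- arXiv:2407.19905 — 5 statements merged into one kernel-verified Lean document; each statement's English description precedes it below -/
import Mathlib

section
/- Consider the Steiner tree instance where G is a cycle on n vertices with unit edge costs, k divides n, every (n/k)-th vertex along the cycle is a terminal (so |R| = k ≥ 2), and r is one fixed terminal. Let y be any feasible solution to the dual of the bidirected cut relaxation whose support { U : y_U > 0 } is a laminar family. Then ∑_U y_U ≤ n/2 + k. -/
/-!
Every support set `U` avoids the root `0` and contains a terminal `t`. Walking from `t` to the
right inside `U` we reach a vertex `ρ U ∈ U` with `ρ U + 1 ∉ U`, and walking to the left a vertex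
`λ U ∈ U` with `λ U - 1 ∉ U`. All sets `U` with `ρ U = v` cross the edge `(v, v + 1)`, so
feasibility gives `∑ y ≤ #ρ(S)`, and likewise `∑ y ≤ #λ(S)`. By laminarity a vertex
`ρ U = λ V` must be the starting terminal of one of the two walks, so `#ρ(S) + #λ(S) ≤ n + k`,
whence `∑ y ≤ (n + k) / 2`.
-/

open Finset

section Walk

variable {G : Type*} [AddGroup G]

/-- The walk `t, t + d, t + 2d, …` inside `U` can leave `U` right after `x`: the next step leaves
`U`, and `x` is either the start `t` or was entered from `x - d`. -/
def IsExit (U : Finset G) (t d x : G) : Prop :=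
  x ∈ U ∧ x + d ∉ U ∧ (x = t ∨ x - d ∈ U)

theorem exists_isExit {U : Finset G} {t d : G} (ht : t ∈ U) {j : ℕ} (hj : t + j • d ∉ U) :
    ∃ x, IsExit U t d x := by
  by_contra! hno
  have hwalk : ∀ i : ℕ, t + i • d ∈ U ∧ (t + i • d = t ∨ t + i • d - d ∈ U) := by
    intro i
    induction i with
    | zero => simpa using ht
    | succ i ih =>
      have hnext : t + i • d + d ∈ U := by
        by_contra hout
        exact hno _ ⟨ih.1, hout, ih.2⟩
      rw [succ_nsmul, ← add_assoc]
      exact ⟨hnext, .inr (by simpa using ih.1)⟩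
  exact hj (hwalk j).1

theorem IsExit.eq_or_eq_of_isExit_neg {U V : Finset G} {s t d x : G} (hU : IsExit U s d x)
    (hV : IsExit V t (-d) x) (hUV : U ⊆ V ∨ V ⊆ U ∨ Disjoint U V) : x = s ∨ x = t := by
  obtain ⟨hxU, hxdU, hsU⟩ := hU
  obtain ⟨hxV, hxdV, htV⟩ := hV
  rw [sub_neg_eq_add] at htV
  rcases hUV with hUV | hVU | hdisj
  · exact .inl (hsU.resolve_right fun h => hxdV (by simpa [sub_eq_add_neg] using hUV h))
  · exact .inr (htV.resolve_right fun h => hxdU (hVU h))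
  · exact absurd hxV (disjoint_left.mp hdisj hxU)

theorem image_inter_image_subset_image_of_isExit [DecidableEq G] {S : Finset (Finset G)}
    (hlam : ∀ U ∈ S, ∀ V ∈ S, U ⊆ V ∨ V ⊆ U ∨ Disjoint U V) {t R L : Finset G → G} {d : G}
    (hR : ∀ U ∈ S, IsExit U (t U) d (R U)) (hL : ∀ U ∈ S, IsExit U (t U) (-d) (L U)) :
    S.image R ∩ S.image L ⊆ S.image t := by
  intro x hx
  obtain ⟨⟨U, hU, rfl⟩, V, hV, hVx⟩ := by simpa only [mem_inter, mem_image] using hx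
  rcases (hR U hU).eq_or_eq_of_isExit_neg (hVx ▸ hL V hV) (hlam U hU V hV) with h | h
  · exact h ▸ mem_image_of_mem t hU
  · exact h ▸ mem_image_of_mem t hV

end Walk

theorem ZMod.exists_isExit_of_isUnit {n : ℕ} [NeZero n] {U : Finset (ZMod n)} {t x : ZMod n}
    (ht : t ∈ U) (hx : x ∉ U) {d : ZMod n} (hd : IsUnit d) : ∃ y, IsExit U t d y := by
  refine exists_isExit ht (j := ((x - t) * ↑hd.unit⁻¹).val) ?_
  rwa [nsmul_eq_mul, ZMod.natCast_zmod_val, mul_assoc, hd.val_inv_mul, mul_one, add_sub_cancel]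

theorem sum_le_card_image_of_sum_le_one {ι α : Type*} [Fintype ι] [DecidableEq α]
    {w : ι → ℝ} (hw : ∀ i, 0 ≤ w i) {P : α → ι → Prop} [∀ a, DecidablePred (P a)]
    (hP : ∀ a, ∑ i with P a i, w i ≤ 1) {s : Finset ι} {f : ι → α}
    (hf : ∀ i ∈ s, P (f i) i) :
    ∑ i ∈ s, w i ≤ #(s.image f) := by
  rw [← sum_fiberwise_of_maps_to fun i hi => mem_image_of_mem f hi]
  calc ∑ a ∈ s.image f, ∑ i ∈ s with f i = a, w i
      ≤ ∑ a ∈ s.image f, (1 : ℝ) := by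
        refine sum_le_sum fun a _ =>
          (sum_le_sum_of_subset_of_nonneg ?_ fun i _ _ => hw i).trans (hP a)
        intro i hi
        rw [mem_filter] at hi ⊢
        exact ⟨mem_univ i, hi.2 ▸ hf i hi.1⟩
    _ = #(s.image f) := by simp

theorem ZMod.card_filter_div_dvd_val_le {n k : ℕ} [NeZero n] (hdvd : k ∣ n) :
    #{i : ZMod n | n / k ∣ i.val} ≤ k := by
  have hn : n = n / k * k := (Nat.div_mul_cancel hdvd).symm
  calc #{i : ZMod n | n / k ∣ i.val} ≤ #(range k) := by
        refine card_le_card_of_injOn (fun i => i.val / (n / k)) (fun i _ => ?_)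
          (fun i hi j hj hij => ?_)
        · exact mem_coe.mpr (mem_range.mpr (Nat.div_lt_of_lt_mul (i.val_lt.trans_eq hn)))
        · simp only [coe_filter, mem_univ, true_and] at hi hj
          apply ZMod.val_injective n
          rw [← Nat.mul_div_cancel' hi, ← Nat.mul_div_cancel' hj]
          exact congrArg (n / k * ·) hij
    _ = k := card_range k

theorem stmt_6_general (n k : ℕ) [NeZero n] (hdvd : k ∣ n)
    (y : Finset (ZMod n) → ℝ)
    (hnn : ∀ U, 0 ≤ y U)
    (hsupp : ∀ U : Finset (ZMod n),
      ¬((0 : ZMod n) ∉ U ∧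
        (U ∩ Finset.univ.filter (fun i : ZMod n => (n / k) ∣ i.val)).Nonempty) →
      y U = 0)
    (hfeas : ∀ i j : ZMod n, (j = i + 1 ∨ i = j + 1) →
      ∑ U ∈ Finset.univ.filter (fun U : Finset (ZMod n) => i ∈ U ∧ j ∉ U), y U ≤ 1)
    (hlam : ∀ A B : Finset (ZMod n), 0 < y A → 0 < y B →
      A ⊆ B ∨ B ⊆ A ∨ A ∩ B = ∅) :
    ∑ U : Finset (ZMod n), y U ≤ (n : ℝ) / 2 + k := by
  classical
  set T : Finset (ZMod n) := {i | n / k ∣ i.val}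
  set S : Finset (Finset (ZMod n)) := {U | 0 < y U}
  have hexit : ∀ U ∈ S, ∃ t ∈ U ∩ T, ∃ r l, IsExit U t 1 r ∧ IsExit U t (-1) l := by
    intro U hU
    obtain ⟨h0, t, ht⟩ := not_not.mp fun h => (mem_filter.mp hU).2.ne' (hsupp U h)
    obtain ⟨r, hr⟩ := ZMod.exists_isExit_of_isUnit (mem_inter.mp ht).1 h0 isUnit_one
    obtain ⟨l, hl⟩ := ZMod.exists_isExit_of_isUnit (mem_inter.mp ht).1 h0 isUnit_one.neg
    exact ⟨t, ht, r, l, hr, hl⟩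
  choose! t ht R L hR hL using hexit
  have hRL : S.image R ∩ S.image L ⊆ T := by
    refine (image_inter_image_subset_image_of_isExit (fun U hU V hV => ?_) hR hL).trans
      (image_subset_iff.mpr fun U hU => (mem_inter.mp (ht U hU)).2)
    simpa only [disjoint_iff_inter_eq_empty] using
      hlam U V (mem_filter.mp hU).2 (mem_filter.mp hV).2
  have hcard : #(S.image R) + #(S.image L) ≤ n + k := by
    rw [← card_union_add_card_inter]
    exact add_le_add ((card_le_univ _).trans (ZMod.card n).le)
      ((card_le_card hRL).trans (ZMod.card_filter_div_dvd_val_le hdvd))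
  have hsumR : ∑ U ∈ S, y U ≤ #(S.image R) :=
    sum_le_card_image_of_sum_le_one hnn (fun v => hfeas v (v + 1) (.inl rfl))
      fun U hU => ⟨(hR U hU).1, (hR U hU).2.1⟩
  have hsumL : ∑ U ∈ S, y U ≤ #(S.image L) :=
    sum_le_card_image_of_sum_le_one hnn (fun v => hfeas v (v + -1) (.inr (by ring)))
      fun U hU => ⟨(hL U hU).1, (hL U hU).2.1⟩
  have hcard' : (#(S.image R) + #(S.image L) : ℝ) ≤ n + k := by exact_mod_cast hcard
  rw [← sum_filter_of_ne fun U _ hU => (hnn U).lt_of_ne' hU]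
  linarith [(Nat.cast_nonneg k : (0 : ℝ) ≤ k)]

/-- On the cycle on n vertices with unit costs, k equally spaced terminals (k ∣ n, k ≥ 2)
and root r = 0, every feasible solution to the dual of the bidirected cut relaxation whose
support is a laminar family has value at most n/2 + k. -/
theorem stmt_6 (n k : ℕ) [NeZero n] (hk : 2 ≤ k) (hkn : k ≤ n) (hdvd : k ∣ n)
    (y : Finset (ZMod n) → ℝ)
    (hnn : ∀ U, 0 ≤ y U)
    (hsupp : ∀ U : Finset (ZMod n),
      ¬((0 : ZMod n) ∉ U ∧
        (U ∩ Finset.univ.filter (fun i : ZMod n => (n / k) ∣ i.val)).Nonempty) →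
      y U = 0)
    (hfeas : ∀ i j : ZMod n, (j = i + 1 ∨ i = j + 1) →
      ∑ U ∈ Finset.univ.filter (fun U : Finset (ZMod n) => i ∈ U ∧ j ∉ U), y U ≤ 1)
    (hlam : ∀ A B : Finset (ZMod n), 0 < y A → 0 < y B →
      A ⊆ B ∨ B ⊆ A ∨ A ∩ B = ∅) :
    ∑ U : Finset (ZMod n), y U ≤ (n : ℝ) / 2 + k :=
  stmt_6_general n k hdvd y hnn hsupp hfeas hlam
end

section
/- On the cycle instances of the previous statement (cycle on n vertices, k equally spaced terminals, unit costs), the minimum cost of a Steiner tree equals ((k−1)/k)·n, and consequently the ratio of the optimum Steiner tree cost to the maximum value of a laminar-support dual solution is at least ((k−1)/k)·n / (n/2 + k), which tends to 2 as k → ∞ and n/k → ∞. -/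
/-!
A set of arcs `(i, i + 1)` of the cycle `ZMod n` connecting all multiples of `m` can omit arcs
only inside a window of `m` consecutive positions: if the arcs at `a` and at some `b ≥ a + m` were
both missing, the positions in `(a, b]` would be closed under the remaining arcs and would contain
a terminal but not the terminal `0`. Hence a Steiner tree has at least `n - m` arcs, and the path
`0 → 1 → ⋯ → n - m` attains this.

Every set in the support of a feasible dual `y` avoids `0` and so has a least position `v` and a
greatest position `w`; it then crosses the arc between `v - 1` and `v`, and the arc between `w` and
`w + 1`. By feasibility the sets with a given least (or greatest) position carry total weight at
most `1`. A position that is least in one support set and greatest in another is a terminal, by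
laminarity, so `2 ∑ y ≤ (n - 1) + k`.
-/

open Finset Relation

theorem sum_le_card_of_cover {ι κ : Type*} {s : Finset ι} {t : Finset κ} {w : ι → ℝ}
    (P : ι → κ → Prop) [∀ i j, Decidable (P i j)] (hw : ∀ i ∈ s, 0 ≤ w i)
    (hcover : ∀ i ∈ s, ∃ j ∈ t, P i j) (hfiber : ∀ j ∈ t, ∑ i ∈ s with P i j, w i ≤ 1) :
    ∑ i ∈ s, w i ≤ #t :=
  calc ∑ i ∈ s, w i ≤ ∑ i ∈ s, ∑ _j ∈ t with P i _j, w i := by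
        refine sum_le_sum fun i hi => ?_
        obtain ⟨j, hj, hij⟩ := hcover i hi
        have hcard : 1 ≤ #{j ∈ t | P i j} := card_pos.mpr ⟨j, mem_filter.mpr ⟨hj, hij⟩⟩
        rw [sum_const, nsmul_eq_mul]
        exact le_mul_of_one_le_left (hw i hi) (by exact_mod_cast hcard)
    _ = ∑ j ∈ t, ∑ i ∈ s with P i j, w i := sum_comm' fun i j => by simp only [mem_filter]; tauto
    _ ≤ ∑ _j ∈ t, 1 := sum_le_sum hfiber
    _ = #t := by simp

theorem Relation.ReflTransGen.iff_of_forall_iff {α : Type*} {r : α → α → Prop} {P : α → Prop}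
    {a b : α} (hab : ReflTransGen r a b) (h : ∀ x y, r x y → (P x ↔ P y)) : P a ↔ P b := by
  induction hab with
  | refl => rfl
  | tail _ hbc ih => exact ih.trans (h _ _ hbc)

theorem ZMod.val_add_one_eq_or {n : ℕ} [NeZero n] (x : ZMod n) :
    (x + 1).val = x.val + 1 ∨ (x.val + 1 = n ∧ (x + 1).val = 0) := by
  have hx : x + 1 = ((x.val + 1 : ℕ) : ZMod n) := by push_cast [natCast_zmod_val]; rfl
  rw [hx, val_natCast]
  rcases (show x.val + 1 ≤ n from x.val_lt).lt_or_eq with h | h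
  · exact .inl (Nat.mod_eq_of_lt h)
  · exact .inr ⟨h, by rw [h, Nat.mod_self]⟩

section Cycle

variable {n : ℕ}

def IsMinVal (U : Finset (ZMod n)) (v : ZMod n) : Prop := v ∈ U ∧ ∀ x ∈ U, v.val ≤ x.val

def IsMaxVal (U : Finset (ZMod n)) (v : ZMod n) : Prop := v ∈ U ∧ ∀ x ∈ U, x.val ≤ v.val

theorem exists_isMinVal {U : Finset (ZMod n)} (hU : U.Nonempty) : ∃ v, IsMinVal U v :=
  let ⟨v, hv, hmin⟩ := U.exists_min_image ZMod.val hU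
  ⟨v, hv, hmin⟩

theorem exists_isMaxVal {U : Finset (ZMod n)} (hU : U.Nonempty) : ∃ v, IsMaxVal U v :=
  let ⟨v, hv, hmax⟩ := U.exists_max_image ZMod.val hU
  ⟨v, hv, hmax⟩

instance (U : Finset (ZMod n)) : DecidablePred (IsMinVal U) :=
  fun _ => inferInstanceAs (Decidable (_ ∧ _))

instance (U : Finset (ZMod n)) : DecidablePred (IsMaxVal U) :=
  fun _ => inferInstanceAs (Decidable (_ ∧ _))

def ArcsConnect (E : Finset (ZMod n × ZMod n)) (T : Finset (ZMod n)) : Prop :=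
  ∀ s₁ ∈ T, ∀ s₂ ∈ T, ReflTransGen (SymmGen fun u v => (u, v) ∈ E) s₁ s₂

def pathArcs (n N : ℕ) : Finset (ZMod n × ZMod n) :=
  (range N).image fun i : ℕ => ((i : ZMod n), (i : ZMod n) + 1)

theorem reflTransGen_pathArcs {N i : ℕ} (hi : i ≤ N) :
    ReflTransGen (SymmGen fun u v => (u, v) ∈ pathArcs n N) 0 (i : ZMod n) := by
  induction i with
  | zero => rw [Nat.cast_zero]
  | succ i ih =>
    refine (ih (by omega)).tail (.of_rel ?_)
    rw [Nat.cast_succ]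
    exact mem_image_of_mem _ (mem_range.mpr hi)

theorem card_pathArcs {N : ℕ} (hN : N ≤ n) : #(pathArcs n N) = N := by
  rw [pathArcs, card_image_of_injOn, card_range]
  intro i hi j hj h
  have h := congrArg (fun e => e.1.val) h
  simp only [coe_range, Set.mem_Iio] at hi hj
  simpa only [ZMod.val_cast_of_lt (hi.trans_le hN), ZMod.val_cast_of_lt (hj.trans_le hN)] using h

variable [NeZero n]

theorem IsMinVal.sub_one_notMem {U : Finset (ZMod n)} {v : ZMod n} (h0 : 0 ∉ U)
    (hv : IsMinVal U v) : v - 1 ∉ U := by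
  intro hx
  have hle := hv.2 _ hx
  rcases (v - 1).val_add_one_eq_or with h | ⟨-, h⟩ <;> rw [sub_add_cancel] at h
  · omega
  · exact h0 ((ZMod.val_eq_zero v).mp h ▸ hv.1)

theorem IsMaxVal.add_one_notMem {U : Finset (ZMod n)} {v : ZMod n} (h0 : 0 ∉ U)
    (hv : IsMaxVal U v) : v + 1 ∉ U := by
  intro hx
  have hle := hv.2 _ hx
  rcases v.val_add_one_eq_or with h | ⟨-, h⟩
  · omega
  · exact h0 ((ZMod.val_eq_zero _).mp h ▸ hx)

theorem IsMinVal.mem_of_isMaxVal {T S S' : Finset (ZMod n)} {v : ZMod n}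
    (hS : (S ∩ T).Nonempty) (hS' : (S' ∩ T).Nonempty) (hlam : S ⊆ S' ∨ S' ⊆ S ∨ S ∩ S' = ∅)
    (hmin : IsMinVal S v) (hmax : IsMaxVal S' v) : v ∈ T := by
  suffices ∃ x ∈ T, x ∈ S ∧ x ∈ S' by
    obtain ⟨x, hxT, hxS, hxS'⟩ := this
    rwa [ZMod.val_injective n ((hmax.2 x hxS').antisymm (hmin.2 x hxS))] at hxT
  rcases hlam with h | h | h
  · obtain ⟨x, hx⟩ := hS
    exact ⟨x, (mem_inter.mp hx).2, (mem_inter.mp hx).1, h (mem_inter.mp hx).1⟩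
  · obtain ⟨x, hx⟩ := hS'
    exact ⟨x, (mem_inter.mp hx).2, h (mem_inter.mp hx).1, (mem_inter.mp hx).1⟩
  · exact absurd (h ▸ mem_inter.mpr ⟨hmin.1, hmax.1⟩) (notMem_empty v)

theorem sum_le_card_filter_isMinVal {s : Finset (Finset (ZMod n))} {y : Finset (ZMod n) → ℝ}
    (hnn : ∀ U, 0 ≤ y U) (hs : ∀ U ∈ s, 0 ∉ U ∧ U.Nonempty)
    (hfeas : ∀ i j : ZMod n, (j = i + 1 ∨ i = j + 1) →
      ∑ U ∈ univ.filter (fun U : Finset (ZMod n) => i ∈ U ∧ j ∉ U), y U ≤ 1) :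
    ∑ U ∈ s, y U ≤ #{v : ZMod n | ∃ U ∈ s, IsMinVal U v} := by
  refine sum_le_card_of_cover IsMinVal (fun U _ => hnn U) (fun U hU => ?_) (fun v _ => ?_)
  · obtain ⟨v, hv⟩ := exists_isMinVal (hs U hU).2
    exact ⟨v, mem_filter.mpr ⟨mem_univ _, U, hU, hv⟩, hv⟩
  · refine (sum_le_sum_of_subset_of_nonneg (fun U hU => ?_) fun U _ _ => hnn U).trans
      (hfeas v (v - 1) (.inr (sub_add_cancel v 1).symm))
    obtain ⟨hU, hv⟩ := mem_filter.mp hU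
    exact mem_filter.mpr ⟨mem_univ _, hv.1, hv.sub_one_notMem (hs U hU).1⟩

theorem sum_le_card_filter_isMaxVal {s : Finset (Finset (ZMod n))} {y : Finset (ZMod n) → ℝ}
    (hnn : ∀ U, 0 ≤ y U) (hs : ∀ U ∈ s, 0 ∉ U ∧ U.Nonempty)
    (hfeas : ∀ i j : ZMod n, (j = i + 1 ∨ i = j + 1) →
      ∑ U ∈ univ.filter (fun U : Finset (ZMod n) => i ∈ U ∧ j ∉ U), y U ≤ 1) :
    ∑ U ∈ s, y U ≤ #{v : ZMod n | ∃ U ∈ s, IsMaxVal U v} := by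
  refine sum_le_card_of_cover IsMaxVal (fun U _ => hnn U) (fun U hU => ?_) (fun v _ => ?_)
  · obtain ⟨v, hv⟩ := exists_isMaxVal (hs U hU).2
    exact ⟨v, mem_filter.mpr ⟨mem_univ _, U, hU, hv⟩, hv⟩
  · refine (sum_le_sum_of_subset_of_nonneg (fun U hU => ?_) fun U _ _ => hnn U).trans
      (hfeas v (v + 1) (.inl rfl))
    obtain ⟨hU, hv⟩ := mem_filter.mp hU
    exact mem_filter.mpr ⟨mem_univ _, hv.1, hv.add_one_notMem (hs U hU).1⟩

theorem two_mul_sum_le_of_laminar {T : Finset (ZMod n)} (y : Finset (ZMod n) → ℝ)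
    (hnn : ∀ U, 0 ≤ y U)
    (hsupp : ∀ U, y U ≠ 0 → (0 : ZMod n) ∉ U ∧ (U ∩ T).Nonempty)
    (hfeas : ∀ i j : ZMod n, (j = i + 1 ∨ i = j + 1) →
      ∑ U ∈ univ.filter (fun U : Finset (ZMod n) => i ∈ U ∧ j ∉ U), y U ≤ 1)
    (hlam : ∀ A B : Finset (ZMod n), 0 < y A → 0 < y B → A ⊆ B ∨ B ⊆ A ∨ A ∩ B = ∅) :
    2 * ∑ U, y U ≤ (n - 1 + #T : ℕ) := by
  set supp : Finset (Finset (ZMod n)) := {U | y U ≠ 0}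
  have hsupp' : ∀ U ∈ supp, 0 ∉ U ∧ (U ∩ T).Nonempty := fun U hU => hsupp U (mem_filter.mp hU).2
  set A : Finset (ZMod n) := {v | ∃ U ∈ supp, IsMinVal U v}
  set B : Finset (ZMod n) := {v | ∃ U ∈ supp, IsMaxVal U v}
  have hunion : A ∪ B ⊆ univ.erase 0 := by
    intro v hv
    refine mem_erase.mpr ⟨?_, mem_univ _⟩
    rcases mem_union.mp hv with hv | hv <;> obtain ⟨-, U, hU, hvU⟩ := mem_filter.mp hv <;>
      exact fun h => (hsupp' U hU).1 (h ▸ hvU.1)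
  have hinter : A ∩ B ⊆ T := by
    intro v hv
    obtain ⟨⟨-, S, hS, hmin⟩, ⟨-, S', hS', hmax⟩⟩ :=
      And.imp mem_filter.mp mem_filter.mp (mem_inter.mp hv)
    have hpos : ∀ U ∈ supp, 0 < y U := fun U hU => (hnn U).lt_of_ne' (mem_filter.mp hU).2
    exact hmin.mem_of_isMaxVal (hsupp' S hS).2 (hsupp' S' hS').2
      (hlam S S' (hpos S hS) (hpos S' hS')) hmax
  have hcard : #A + #B ≤ n - 1 + #T :=
    calc #A + #B = #(A ∪ B) + #(A ∩ B) := (card_union_add_card_inter A B).symm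
      _ ≤ #(univ.erase (0 : ZMod n)) + #T := add_le_add (card_le_card hunion) (card_le_card hinter)
      _ = n - 1 + #T := by rw [card_erase_of_mem (mem_univ _), card_univ, ZMod.card]
  have hs : ∀ U ∈ supp, 0 ∉ U ∧ U.Nonempty :=
    fun U hU => ⟨(hsupp' U hU).1, (hsupp' U hU).2.mono inter_subset_left⟩
  have hA := sum_le_card_filter_isMinVal hnn hs hfeas
  have hB := sum_le_card_filter_isMaxVal hnn hs hfeas
  have hsum : ∑ U, y U = ∑ U ∈ supp, y U := (sum_filter_ne_zero _).symm
  have : (#A : ℝ) + #B ≤ (n - 1 + #T : ℕ) := by exact_mod_cast hcard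
  linarith

theorem card_filter_dvd_val_le {m : ℕ} (hm : m ∣ n) : #{i : ZMod n | m ∣ i.val} ≤ n / m :=
  calc #{i : ZMod n | m ∣ i.val} ≤ #(range (n / m)) := by
        refine card_le_card_of_injOn (fun i => i.val / m)
          (fun i _ => mem_range.mpr (Nat.div_lt_div_of_lt_of_dvd hm i.val_lt)) ?_
        intro i hi j hj hij
        simp only [coe_filter, mem_univ, true_and, Set.mem_ofPred_eq] at hi hj hij
        exact ZMod.val_injective n (by rw [← Nat.mul_div_cancel' hi, ← Nat.mul_div_cancel' hj, hij])
    _ = n / m := card_range _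

theorem iff_of_reflTransGen_of_notMem {E : Finset (ZMod n × ZMod n)}
    (hE : ∀ e ∈ E, e.2 = e.1 + 1) {a b : ZMod n} (ha : (a, a + 1) ∉ E) (hb : (b, b + 1) ∉ E)
    {x y : ZMod n} (hxy : ReflTransGen (SymmGen fun u v => (u, v) ∈ E) x y) :
    (a.val < x.val ∧ x.val ≤ b.val) ↔ (a.val < y.val ∧ y.val ≤ b.val) := by
  have harc : ∀ c, (c, c + 1) ∈ E →
      ((a.val < c.val ∧ c.val ≤ b.val) ↔ (a.val < (c + 1).val ∧ (c + 1).val ≤ b.val)) := by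
    intro c hc
    have hca : c.val ≠ a.val := fun h => ha (ZMod.val_injective n h ▸ hc)
    have hcb : c.val ≠ b.val := fun h => hb (ZMod.val_injective n h ▸ hc)
    have := b.val_lt
    rcases c.val_add_one_eq_or with h | ⟨hn, h⟩ <;> rw [h] <;> omega
  refine hxy.iff_of_forall_iff (P := fun z => a.val < z.val ∧ z.val ≤ b.val) fun u v huv => ?_
  rcases huv with h | h
  · obtain rfl : v = u + 1 := hE _ h
    exact harc u h
  · obtain rfl : u = v + 1 := hE _ h
    exact (harc v h).symm

section Connects

variable {m : ℕ} {E : Finset (ZMod n × ZMod n)}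

theorem val_lt_add_of_notMem (hm : 0 < m) (hE : ∀ e ∈ E, e.2 = e.1 + 1)
    (hconn : ArcsConnect E {i | m ∣ i.val})
    {a b : ZMod n} (ha : (a, a + 1) ∉ E) (hb : (b, b + 1) ∉ E) : b.val < a.val + m := by
  by_contra! hba
  set t := m * (a.val / m + 1) with ht
  have hat : a.val < t := Nat.lt_mul_div_succ _ hm
  have htb : t ≤ b.val := by
    have := Nat.mul_div_le a.val m
    rw [ht, mul_add_one]
    omega
  have htv : (t : ZMod n).val = t := ZMod.val_cast_of_lt (by have := b.val_lt; omega)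
  have htT : (t : ZMod n) ∈ ({i | m ∣ i.val} : Finset (ZMod n)) := by
    rw [mem_filter, htv]
    exact ⟨mem_univ _, dvd_mul_right _ _⟩
  have h := iff_of_reflTransGen_of_notMem hE ha hb (hconn t htT 0 (by simp))
  rw [htv, ZMod.val_zero] at h
  exact absurd (h.mp ⟨hat, htb⟩).1 (Nat.not_lt_zero _)

theorem card_filter_arc_notMem_le (hm : 0 < m) (hE : ∀ e ∈ E, e.2 = e.1 + 1)
    (hconn : ArcsConnect E {i | m ∣ i.val}) :
    #{i : ZMod n | (i, i + 1) ∉ E} ≤ m := by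
  rcases ({i : ZMod n | (i, i + 1) ∉ E} : Finset _).eq_empty_or_nonempty with h | h
  · simp [h]
  obtain ⟨a, ha, hmin⟩ := exists_min_image _ ZMod.val h
  calc #{i : ZMod n | (i, i + 1) ∉ E} ≤ #(Ico a.val (a.val + m)) :=
        card_le_card_of_injOn ZMod.val (fun b hb => mem_Ico.mpr ⟨hmin b hb,
          val_lt_add_of_notMem hm hE hconn (mem_filter.mp ha).2 (mem_filter.mp hb).2⟩)
          (ZMod.val_injective n).injOn
    _ = m := by simp

theorem sub_le_card_of_connects (hm : 0 < m) (hE : ∀ e ∈ E, e.2 = e.1 + 1)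
    (hconn : ArcsConnect E {i | m ∣ i.val}) :
    n - m ≤ #E := by
  have hsplit := card_filter_add_card_filter_not (s := univ) fun i : ZMod n => (i, i + 1) ∈ E
  rw [card_univ, ZMod.card] at hsplit
  have hpresent : #{i : ZMod n | (i, i + 1) ∈ E} ≤ #E :=
    card_le_card_of_injOn (fun i => (i, i + 1)) (fun i hi => (mem_filter.mp hi).2)
      fun i _ j _ h => congrArg Prod.fst h
  have := card_filter_arc_notMem_le hm hE hconn
  omega

theorem exists_connecting_arcs (hm : m ∣ n) :
    ∃ E : Finset (ZMod n × ZMod n), (∀ e ∈ E, e.2 = e.1 + 1) ∧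
      ArcsConnect E {i | m ∣ i.val} ∧ n - m = #E := by
  refine ⟨pathArcs n (n - m), fun e he => ?_, fun s₁ h₁ s₂ h₂ => ?_,
    (card_pathArcs (by omega)).symm⟩
  · obtain ⟨i, -, rfl⟩ := mem_image.mp he
    rfl
  have hreach : ∀ s ∈ ({i | m ∣ i.val} : Finset (ZMod n)),
      ReflTransGen (SymmGen fun u v => (u, v) ∈ pathArcs n (n - m)) 0 s := by
    intro s hs
    have hlt := s.val_lt
    have hle : m ≤ n - s.val :=
      Nat.le_of_dvd (by omega) (Nat.dvd_sub hm (mem_filter.mp hs).2)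
    simpa only [ZMod.natCast_zmod_val] using
      reflTransGen_pathArcs (n := n) (by omega : s.val ≤ n - m)
  exact (symm (hreach s₁ h₁)).trans (hreach s₂ h₂)

end Connects

end Cycle

theorem two_sub_lt_div {ε K M : ℝ} (hK : 8 < ε * K) (hM : 8 < ε * M) (hK0 : 0 < K)
    (hM0 : 0 < M) : 2 - ε < (K - 1) / K * (K * M) / (K * M / 2 + K) := by
  have hnum : (K - 1) / K * (K * M) = (K - 1) * M := by field_simp
  rw [hnum, lt_div_iff₀ (by positivity)]
  nlinarith [mul_lt_mul_of_pos_right hK hM0, mul_lt_mul_of_pos_right hM hK0]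

theorem exists_two_sub_lt_div :
    ∀ ε > (0 : ℝ), ∃ k₀ N₀ : ℕ, ∀ k' n' : ℕ, k₀ ≤ k' → N₀ ≤ n' / k' → k' ∣ n' →
      2 - ε < (((k' : ℝ) - 1) / k' * n') / ((n' : ℝ) / 2 + k') := by
  intro ε hε
  obtain ⟨N, hN⟩ := exists_nat_gt (8 / ε)
  have hN8 : 8 < ε * N := by rwa [div_lt_iff₀ hε, mul_comm] at hN
  have hN0 : (0 : ℝ) < N := (div_pos (by norm_num) hε).trans hN
  refine ⟨N, N, fun k n hk hm hdvd => ?_⟩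
  obtain ⟨q, rfl⟩ := hdvd
  have hkN : (N : ℝ) ≤ k := by exact_mod_cast hk
  have hk0 : 0 < k := by exact_mod_cast hN0.trans_le hkN
  have hqN : (N : ℝ) ≤ q := by exact_mod_cast Nat.mul_div_cancel_left q hk0 ▸ hm
  rw [Nat.cast_mul]
  exact two_sub_lt_div (by nlinarith) (by nlinarith) (by linarith) (by linarith)

theorem stmt_7_general (n k : ℕ) [NeZero n] (hdvd : k ∣ n)
    (y : Finset (ZMod n) → ℝ)
    (hnn : ∀ U, 0 ≤ y U)
    (hsupp : ∀ U : Finset (ZMod n),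
      ¬((0 : ZMod n) ∉ U ∧
        (U ∩ Finset.univ.filter (fun i : ZMod n => (n / k) ∣ i.val)).Nonempty) →
      y U = 0)
    (hfeas : ∀ i j : ZMod n, (j = i + 1 ∨ i = j + 1) →
      ∑ U ∈ Finset.univ.filter (fun U : Finset (ZMod n) => i ∈ U ∧ j ∉ U), y U ≤ 1)
    (hlam : ∀ A B : Finset (ZMod n), 0 < y A → 0 < y B →
      A ⊆ B ∨ B ⊆ A ∨ A ∩ B = ∅)
    (hy : 0 < ∑ U : Finset (ZMod n), y U) :
    IsLeast { m : ℕ | ∃ E : Finset (ZMod n × ZMod n),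
        (∀ e ∈ E, e.2 = e.1 + 1) ∧
        (∀ s₁ ∈ Finset.univ.filter (fun i : ZMod n => (n / k) ∣ i.val),
         ∀ s₂ ∈ Finset.univ.filter (fun i : ZMod n => (n / k) ∣ i.val),
          Relation.ReflTransGen (fun a b => (a, b) ∈ E ∨ (b, a) ∈ E) s₁ s₂) ∧
        m = E.card } (n - n / k) ∧
    ((n : ℝ) - (n / k : ℕ)) = ((k : ℝ) - 1) / k * n ∧
    (((k : ℝ) - 1) / k * n) / ((n : ℝ) / 2 + k)
      ≤ ((n : ℝ) - (n / k : ℕ)) / (∑ U : Finset (ZMod n), y U) ∧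
    (∀ ε > (0 : ℝ), ∃ k₀ N₀ : ℕ, ∀ k' n' : ℕ, k₀ ≤ k' → N₀ ≤ n' / k' → k' ∣ n' →
      2 - ε < (((k' : ℝ) - 1) / k' * n') / ((n' : ℝ) / 2 + k')) := by
  have hk0 : 0 < k := Nat.pos_of_dvd_of_pos hdvd (NeZero.pos n)
  have hm : 0 < n / k := Nat.div_pos (Nat.le_of_dvd (NeZero.pos n) hdvd) hk0
  have hcost : (n : ℝ) - (n / k : ℕ) = ((k : ℝ) - 1) / k * n := by
    rw [Nat.cast_div hdvd (by positivity)]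
    field_simp
  have hdual := two_mul_sum_le_of_laminar y hnn (fun U hU => not_not.mp (mt (hsupp U) hU))
    hfeas hlam
  have hterminals := card_filter_dvd_val_le (n := n) (Nat.div_dvd_of_dvd hdvd)
  rw [Nat.div_div_self hdvd (NeZero.ne n)] at hterminals
  refine ⟨⟨exists_connecting_arcs (Nat.div_dvd_of_dvd hdvd),
    fun c ⟨E, hE, hconn, hc⟩ => hc ▸ sub_le_card_of_connects hm hE hconn⟩, hcost, ?_,
    exists_two_sub_lt_div⟩
  rw [← hcost]
  refine div_le_div_of_nonneg_left (sub_nonneg.mpr (by exact_mod_cast Nat.div_le_self n k)) hy ?_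
  have : ((n - 1 + #{i : ZMod n | n / k ∣ i.val} : ℕ) : ℝ) ≤ n + 2 * k := by
    exact_mod_cast (by omega : n - 1 + #{i : ZMod n | n / k ∣ i.val} ≤ n + 2 * k)
  linarith

/-- On the cycle instances (cycle on n vertices, k equally spaced terminals, unit costs),
the minimum cost of a Steiner tree equals n − n/k = ((k−1)/k)·n, the ratio of the optimum
Steiner tree cost to the value of any laminar-support feasible dual solution is at least
(((k−1)/k)·n)/(n/2 + k), and this lower bound tends to 2 as k → ∞ and n/k → ∞. -/
theorem stmt_7 (n k : ℕ) [NeZero n] (hk : 2 ≤ k) (hkn : k ≤ n) (hdvd : k ∣ n)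
    (y : Finset (ZMod n) → ℝ)
    (hnn : ∀ U, 0 ≤ y U)
    (hsupp : ∀ U : Finset (ZMod n),
      ¬((0 : ZMod n) ∉ U ∧
        (U ∩ Finset.univ.filter (fun i : ZMod n => (n / k) ∣ i.val)).Nonempty) →
      y U = 0)
    (hfeas : ∀ i j : ZMod n, (j = i + 1 ∨ i = j + 1) →
      ∑ U ∈ Finset.univ.filter (fun U : Finset (ZMod n) => i ∈ U ∧ j ∉ U), y U ≤ 1)
    (hlam : ∀ A B : Finset (ZMod n), 0 < y A → 0 < y B →
      A ⊆ B ∨ B ⊆ A ∨ A ∩ B = ∅)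
    (hy : 0 < ∑ U : Finset (ZMod n), y U) :
    IsLeast { m : ℕ | ∃ E : Finset (ZMod n × ZMod n),
        (∀ e ∈ E, e.2 = e.1 + 1) ∧
        (∀ s₁ ∈ Finset.univ.filter (fun i : ZMod n => (n / k) ∣ i.val),
         ∀ s₂ ∈ Finset.univ.filter (fun i : ZMod n => (n / k) ∣ i.val),
          Relation.ReflTransGen (fun a b => (a, b) ∈ E ∨ (b, a) ∈ E) s₁ s₂) ∧
        m = E.card } (n - n / k) ∧
    ((n : ℝ) - (n / k : ℕ)) = ((k : ℝ) - 1) / k * n ∧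
    (((k : ℝ) - 1) / k * n) / ((n : ℝ) / 2 + k)
      ≤ ((n : ℝ) - (n / k : ℕ)) / (∑ U : Finset (ZMod n), y U) ∧
    (∀ ε > (0 : ℝ), ∃ k₀ N₀ : ℕ, ∀ k' n' : ℕ, k₀ ≤ k' → N₀ ≤ n' / k' → k' ∣ n' →
      2 - ε < (((k' : ℝ) - 1) / k' * n') / ((n' : ℝ) / 2 + k')) :=
  stmt_7_general n k hdvd y hnn hsupp hfeas hlam hy
end

section
/- Let 𝒮 be the laminar family of all parts of the partitions 𝒮^t over t ∈ [0, t_max), and for S ∈ 𝒮 with r ∉ S let [a^S, d^S) be the interval of times t with S ∈ 𝒮^t. Then for S ∈ 𝒮 with r ∉ S and terminals s₁ ∈ S and s₂ ∈ R: t_merge(s₁, s₂) < d^S if and only if s₂ ∈ S. -/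
open Relation

section Threshold

variable {V : Type*} [PseudoMetricSpace V] {R : Set V}

theorem reflTransGen_threshold_mono {t t' : ℝ} (htt' : t ≤ t') {a b : V}
    (h : ReflTransGen (fun a b => a ∈ R ∧ b ∈ R ∧ dist a b ≤ 2 * t) a b) :
    ReflTransGen (fun a b => a ∈ R ∧ b ∈ R ∧ dist a b ≤ 2 * t') a b :=
  ReflTransGen.mono (fun _ _ ⟨ha, hb, hd⟩ => ⟨ha, hb, hd.trans (by linarith)⟩) _ _ h

/-- The set of merge times is nonempty since `a` and `b` are joined directly at `t = dist a b / 2`. -/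
theorem sInf_mergeTimes_lt_iff {a b : V} (ha : a ∈ R) (hb : b ∈ R) (d : ℝ) :
    sInf {t : ℝ | 0 ≤ t ∧ ReflTransGen (fun a b => a ∈ R ∧ b ∈ R ∧ dist a b ≤ 2 * t) a b} < d ↔
      ∃ t, 0 ≤ t ∧ t < d ∧ ReflTransGen (fun a b => a ∈ R ∧ b ∈ R ∧ dist a b ≤ 2 * t) a b := by
  have hne : dist a b / 2 ∈ {t : ℝ | 0 ≤ t ∧
      ReflTransGen (fun a b => a ∈ R ∧ b ∈ R ∧ dist a b ≤ 2 * t) a b} :=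
    ⟨by positivity, .single ⟨ha, hb, by linarith⟩⟩
  rw [csInf_lt_iff ⟨0, fun _ ht => ht.1⟩ ⟨_, hne⟩]
  exact ⟨fun ⟨t, ⟨ht0, hab⟩, htd⟩ => ⟨t, ht0, htd, hab⟩,
    fun ⟨t, ht0, htd, hab⟩ => ⟨t, ⟨ht0, hab⟩, htd⟩⟩

end Threshold

theorem stmt_10_general {V : Type*} [MetricSpace V] (R : Set V)
    (tmerge : V → V → ℝ)
    (htm : ∀ s s' : V, tmerge s s' = sInf {t : ℝ | 0 ≤ t ∧
      Relation.ReflTransGen (fun a b => a ∈ R ∧ b ∈ R ∧ dist a b ≤ 2 * t) s s'})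
    (comp : ℝ → V → Set V)
    (hcomp : ∀ t s, comp t s = {s' | s' ∈ R ∧
      Relation.ReflTransGen (fun a b => a ∈ R ∧ b ∈ R ∧ dist a b ≤ 2 * t) s s'})
    (S : Set V) (s₁ : V) (hs₁R : s₁ ∈ R)
    (aS dS : ℝ) (haS : 0 ≤ aS) (hlt : aS < dS)
    (hinterval : ∀ t : ℝ, 0 ≤ t → (comp t s₁ = S ↔ aS ≤ t ∧ t < dS)) :
    ∀ s₂ ∈ R, (tmerge s₁ s₂ < dS ↔ s₂ ∈ S) := by
  intro s₂ hs₂R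
  rw [htm, sInf_mergeTimes_lt_iff hs₁R hs₂R]
  constructor
  · rintro ⟨t, -, htd, hpath⟩
    -- Components only grow, and at time `max t aS` the component of `s₁` is `S`.
    have hS : comp (max t aS) s₁ = S :=
      (hinterval _ (haS.trans (le_max_right _ _))).mpr ⟨le_max_right _ _, max_lt htd hlt⟩
    rw [← hS, hcomp]
    exact ⟨hs₂R, reflTransGen_threshold_mono (le_max_left _ _) hpath⟩
  · intro hs₂
    rw [← (hinterval aS haS).mpr ⟨le_rfl, hlt⟩, hcomp] at hs₂
    exact ⟨aS, haS, hlt, hs₂.2⟩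

/-- For a set S of the laminar merge family with r ∉ S, active exactly during [a^S, d^S),
and terminals s₁ ∈ S, s₂ ∈ R: t_merge(s₁,s₂) < d^S if and only if s₂ ∈ S. -/
theorem stmt_10 {V : Type*} [MetricSpace V] [Fintype V] (R : Set V) (r : V) (hrR : r ∈ R)
    (tmerge : V → V → ℝ)
    (htm : ∀ s s' : V, tmerge s s' = sInf {t : ℝ | 0 ≤ t ∧
      Relation.ReflTransGen (fun a b => a ∈ R ∧ b ∈ R ∧ dist a b ≤ 2 * t) s s'})
    (comp : ℝ → V → Set V)
    (hcomp : ∀ t s, comp t s = {s' | s' ∈ R ∧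
      Relation.ReflTransGen (fun a b => a ∈ R ∧ b ∈ R ∧ dist a b ≤ 2 * t) s s'})
    (S : Set V) (s₁ : V) (hs₁R : s₁ ∈ R) (hs₁ : s₁ ∈ S) (hrS : r ∉ S)
    (aS dS : ℝ) (haS : 0 ≤ aS) (hlt : aS < dS)
    (hinterval : ∀ t : ℝ, 0 ≤ t → (comp t s₁ = S ↔ aS ≤ t ∧ t < dS)) :
    ∀ s₂ ∈ R, (tmerge s₁ s₂ < dS ↔ s₂ ∈ S) :=
  stmt_10_general R tmerge htm comp hcomp S s₁ hs₁R aS dS haS hlt hinterval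
end

section
/- With the setup of the previous statement, drop(X) := mst(G[R]) − mst(G[R]/X) equals the maximum value 2·∑_{S ∈ 𝒮̃} d^S over all drop certificates 𝒮̃ for X. In particular, the value of every drop certificate for X is a lower bound on drop(X). -/
/-!
Both bounds come from releasing the terminals from the contracted set one at a time, the drop
being `contractedMstCost R ∅ - contractedMstCost R X`.

If `S` is a component with `S ∩ X = {x}`, releasing `x` costs at least `2 d^S`: in an optimal edge
set for `X \ {x}` the path from `x` to another terminal `y` leaves `S` through an edge of length
at least `2 d^S`, and this edge becomes redundant once `x` and `y` are contracted together. The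
members of a certificate are laminar, so an inclusion-minimal member meeting `X` meets it in one
terminal; induction gives that every certificate is worth at most the drop.

Conversely, let `x, y` be the terminals merging first, at time `τ`. The component of `x` just
before `τ` meets `X` only in `x` and has `d^S ≥ τ`, while a chain of steps of length at most `2τ`
from `x` to `y` shows that releasing `x` costs at most `2τ`. These components form a certificate
worth at least the drop.
-/

open Relation

section Relation

variable {α : Type*} {r r' : α → α → Prop}

def withEdge (r : α → α → Prop) (u v : α) (a b : α) : Prop :=
  r a b ∨ (a = u ∧ b = v) ∨ (a = v ∧ b = u)

instance [Std.Symm r] (u v : α) : Std.Symm (withEdge r u v) where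
  symm a b := by
    rintro (h | ⟨rfl, rfl⟩ | ⟨rfl, rfl⟩)
    exacts [Or.inl (symm h), Or.inr (Or.inr ⟨rfl, rfl⟩), Or.inr (Or.inl ⟨rfl, rfl⟩)]

theorem withEdge_mono (h : r ≤ r') (u v : α) : withEdge r u v ≤ withEdge r' u v :=
  fun a b => Or.imp_left (h a b)

theorem withEdge_le_reflTransGen [Std.Symm r'] {u v : α} (h : r ≤ r')
    (huv : ReflTransGen r' u v) : withEdge r u v ≤ ReflTransGen r' := by
  rintro a b (hab | ⟨rfl, rfl⟩ | ⟨rfl, rfl⟩)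
  exacts [.single (h a b hab), huv, symm huv]

theorem Relation.TransGen.exists_rel_of_forall {p q : α → Prop} {a b : α}
    (h : TransGen r a b) (ha : p a) (hb : q b) (hpq : ∀ u v, r u v → p u ∨ q u) :
    ∃ u v, r u v ∧ p u ∧ q v := by
  induction h with
  | single hab => exact ⟨a, _, hab, ha, hb⟩
  | @tail c b _ hcb ih => exact (hpq c b hcb).elim (fun hc => ⟨c, b, hcb, hc, hb⟩) ih

theorem reflTransGen_withEdge [Std.Symm r] {u v p q : α}
    (h : ReflTransGen (withEdge r u v) p q) :
    ReflTransGen r p q ∨ ((ReflTransGen r p u ∨ ReflTransGen r p v) ∧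
      (ReflTransGen r q u ∨ ReflTransGen r q v)) := by
  induction h with
  | refl => exact Or.inl .refl
  | @tail b c _ hbc ih =>
    rcases hbc with hbc | ⟨rfl, rfl⟩ | ⟨rfl, rfl⟩
    · have hcb : ReflTransGen r c b := .single (symm hbc)
      exact ih.imp (·.tail hbc) fun h => ⟨h.1, h.2.imp hcb.trans hcb.trans⟩
    · exact Or.inr ⟨ih.elim Or.inl (·.1), Or.inr .refl⟩
    · exact Or.inr ⟨ih.elim Or.inr (·.1), Or.inl .refl⟩

theorem reflTransGen_withEdge_exchange [Std.Symm r] {u v x y : α}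
    (h : ReflTransGen (withEdge r u v) x y) (hxy : ¬ ReflTransGen r x y) :
    ReflTransGen (withEdge r x y) u v := by
  have lift : ReflTransGen r ≤ ReflTransGen (withEdge r x y) :=
    ReflTransGen.mono fun _ _ => Or.inl
  have hxy' : ReflTransGen (withEdge r x y) x y := .single (Or.inr (Or.inl ⟨rfl, rfl⟩))
  rcases (reflTransGen_withEdge h).resolve_left hxy with
    ⟨hxu | hxv, hyu | hyv⟩
  · exact absurd (hxu.trans (symm hyu)) hxy
  · exact (lift _ _ (symm hxu)).trans (hxy'.trans (lift _ _ hyv))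
  · exact (lift _ _ (symm hyu)).trans ((symm hxy').trans (lift _ _ hxv))
  · exact absurd (hxv.trans (symm hyv)) hxy

def Separates (F : Finset (Set α)) (X : Finset α) : Prop :=
  ∀ s₁ ∈ X, ∀ s₂ ∈ X, s₁ ≠ s₂ → ∃ S ∈ F, (s₁ ∈ S ∧ s₂ ∉ S) ∨ (s₂ ∈ S ∧ s₁ ∉ S)

/-- Any inclusion-minimal member meeting `X` works. -/
theorem Separates.exists_inter_eq_singleton {F : Finset (Set α)} {X : Finset α}
    (hsep : Separates F X) (hlam : ∀ S ∈ F, ∀ T ∈ F, ∀ z ∈ S, z ∈ T → S ⊆ T ∨ T ⊆ S)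
    (hX : 1 < X.card) : ∃ S ∈ F, ∃ x ∈ X, x ∈ S ∧ ∀ z ∈ X, z ∈ S → z = x := by
  classical
  have hmeet : (F.filter fun S => ∃ x ∈ X, x ∈ S).Nonempty := by
    obtain ⟨a, ha, b, hb, hab⟩ := Finset.one_lt_card.mp hX
    obtain ⟨T, hT, ⟨haT, -⟩ | ⟨hbT, -⟩⟩ := hsep a ha b hb hab
    exacts [⟨T, Finset.mem_filter.2 ⟨hT, a, ha, haT⟩⟩, ⟨T, Finset.mem_filter.2 ⟨hT, b, hb, hbT⟩⟩]
  obtain ⟨S, hSmin⟩ := Finset.exists_minimal hmeet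
  obtain ⟨hS, x, hx, hxS⟩ := Finset.mem_filter.1 hSmin.prop
  refine ⟨S, hS, x, hx, hxS, fun z hz hzS => by_contra fun hzx => ?_⟩
  obtain ⟨T, hT, w, hwX, hwS, hwT, w', hw'S, hw'T⟩ :
      ∃ T ∈ F, ∃ w ∈ X, w ∈ S ∧ w ∈ T ∧ ∃ w' ∈ S, w' ∉ T := by
    obtain ⟨T, hT, ⟨h1, h2⟩ | ⟨h1, h2⟩⟩ := hsep z hz x hx hzx
    exacts [⟨T, hT, z, hz, hzS, h1, x, hxS, h2⟩, ⟨T, hT, x, hx, hxS, h1, z, hzS, h2⟩]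
  rcases hlam S hS T hT w hwS hwT with hST | hTS
  · exact hw'T (hST hw'S)
  · exact hw'T (hSmin.2 (Finset.mem_filter.2 ⟨hT, w, hwX, hwT⟩) hTS hw'S)

theorem Separates.erase [DecidableEq α] {F : Finset (Set α)} {X : Finset α} {S : Set α} {x : α}
    (hsep : Separates F X) (hSX : ∀ z ∈ X, z ∈ S → z = x) :
    Separates (F.erase S) (X.erase x) := by
  intro s₁ h₁ s₂ h₂ h₁₂
  obtain ⟨T, hT, hTsep⟩ := hsep s₁ (Finset.mem_of_mem_erase h₁) s₂ (Finset.mem_of_mem_erase h₂) h₁₂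
  refine ⟨T, Finset.mem_erase.2 ⟨?_, hT⟩, hTsep⟩
  rintro rfl
  rcases hTsep with ⟨h, -⟩ | ⟨h, -⟩
  · exact Finset.ne_of_mem_erase h₁ (hSX s₁ (Finset.mem_of_mem_erase h₁) h)
  · exact Finset.ne_of_mem_erase h₂ (hSX s₂ (Finset.mem_of_mem_erase h₂) h)

theorem Separates.insert [DecidableEq α] {F : Finset (Set α)} {X : Finset α} {S : Set α} {x : α}
    (hsep : Separates F (X.erase x)) (hxS : x ∈ S) (hSX : ∀ z ∈ X, z ∈ S → z = x) :
    Separates (insert S F) X := by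
  intro s₁ h₁ s₂ h₂ h₁₂
  by_cases hx₁ : s₁ = x
  · subst hx₁
    exact ⟨S, Finset.mem_insert_self S F, Or.inl ⟨hxS, fun h => h₁₂ (hSX s₂ h₂ h).symm⟩⟩
  by_cases hx₂ : s₂ = x
  · subst hx₂
    exact ⟨S, Finset.mem_insert_self S F, Or.inr ⟨hxS, fun h => h₁₂ (hSX s₁ h₁ h)⟩⟩
  obtain ⟨T, hT, hTsep⟩ :=
    hsep s₁ (Finset.mem_erase.2 ⟨hx₁, h₁⟩) s₂ (Finset.mem_erase.2 ⟨hx₂, h₂⟩) h₁₂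
  exact ⟨T, Finset.mem_insert_of_mem hT, hTsep⟩

end Relation

section Contraction

variable {α : Type*}

def symmAdj (E : Finset (α × α)) (a b : α) : Prop :=
  (a, b) ∈ E ∨ (b, a) ∈ E

/-- Contracting `Y` to a point is modelled by making any two points of `Y` adjacent. -/
def contractAdj (E : Finset (α × α)) (Y : Finset α) (a b : α) : Prop :=
  symmAdj E a b ∨ (a ∈ Y ∧ b ∈ Y)

instance (E : Finset (α × α)) (Y : Finset α) : Std.Symm (contractAdj E Y) where
  symm _ _ := Or.imp Or.symm And.symm

theorem contractAdj_mono {E E' : Finset (α × α)} (h : E ⊆ E') (Y : Finset α) :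
    contractAdj E Y ≤ contractAdj E' Y :=
  fun _ _ => Or.imp_left (Or.imp (@h _) (@h _))

theorem reflTransGen_contractAdj_of_subsingleton (E : Finset (α × α)) {Y : Finset α}
    (hY : Y.card ≤ 1) : ReflTransGen (contractAdj E Y) = ReflTransGen (symmAdj E) := by
  refine le_antisymm (reflTransGen_closed ?_) (ReflTransGen.mono fun _ _ => Or.inl)
  rintro a b (h | ⟨ha, hb⟩)
  · exact .single h
  · rw [Finset.card_le_one.mp hY a ha b hb]

variable [DecidableEq α]

theorem contractAdj_le_withEdge_erase (E : Finset (α × α)) (Y : Finset α) (e : α × α) :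
    contractAdj E Y ≤ withEdge (contractAdj (E.erase e) Y) e.1 e.2 := by
  rintro a b ((h | h) | h)
  · by_cases hab : (a, b) = e
    · exact Or.inr (Or.inl (Prod.ext_iff.mp hab))
    · exact Or.inl (Or.inl (Or.inl (Finset.mem_erase.2 ⟨hab, h⟩)))
  · by_cases hba : (b, a) = e
    · exact Or.inr (Or.inr (Prod.ext_iff.mp hba).symm)
    · exact Or.inl (Or.inl (Or.inr (Finset.mem_erase.2 ⟨hba, h⟩)))
  · exact Or.inl (Or.inr h)

theorem contractAdj_le_reflTransGen_withEdge (E : Finset (α × α)) {Y : Finset α} {x y : α}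
    (hy : y ∈ Y) (hxy : x ≠ y) :
    contractAdj E Y ≤ ReflTransGen (withEdge (contractAdj E (Y.erase x)) x y) := by
  have hy' : y ∈ Y.erase x := Finset.mem_erase.2 ⟨hxy.symm, hy⟩
  have toY : ∀ c ∈ Y, ReflTransGen (withEdge (contractAdj E (Y.erase x)) x y) y c := by
    intro c hc
    by_cases hcx : c = x
    · exact .single (Or.inr (Or.inr ⟨rfl, hcx⟩))
    · exact .single (Or.inl (Or.inr ⟨hy', Finset.mem_erase.2 ⟨hcx, hc⟩⟩))
  rintro a b (h | ⟨ha, hb⟩)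
  · exact .single (Or.inl (Or.inl h))
  · exact (symm (toY a ha)).trans (toY b hb)

theorem withEdge_contractAdj_erase_le (E : Finset (α × α)) {Y : Finset α} {x y : α}
    (hx : x ∈ Y) (hy : y ∈ Y) : withEdge (contractAdj E (Y.erase x)) x y ≤ contractAdj E Y := by
  rintro a b (h | ⟨rfl, rfl⟩ | ⟨rfl, rfl⟩)
  · exact h.imp_right (And.imp Finset.mem_of_mem_erase Finset.mem_of_mem_erase)
  · exact Or.inr ⟨hx, hy⟩
  · exact Or.inr ⟨hy, hx⟩

/-- Take a minimal `F ⊆ E` still joining `x` to `y`; an edge of `F` crossing `S` is then needed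
for this, so it can be exchanged for the edge `xy`. -/
theorem exists_crossing_edge_exchange (E : Finset (α × α)) {Y : Finset α} {S : Set α}
    {x y : α} (hYS : ∀ z ∈ Y, z ∉ S) (hx : x ∈ S) (hy : y ∉ S)
    (hxy : ReflTransGen (contractAdj E Y) x y) :
    ∃ e ∈ E, (e.1 ∈ S ∧ e.2 ∉ S ∨ e.2 ∈ S ∧ e.1 ∉ S) ∧
      ReflTransGen (contractAdj E Y) ≤ ReflTransGen (withEdge (contractAdj (E.erase e) Y) x y) := by
  classical
  obtain ⟨F, hF, hFmin⟩ := Finset.exists_min_image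
    (E.powerset.filter fun F => ReflTransGen (contractAdj F Y) x y) Finset.card
    ⟨E, Finset.mem_filter.2 ⟨Finset.mem_powerset_self E, hxy⟩⟩
  obtain ⟨hFE, hFxy⟩ := Finset.mem_filter.1 hF
  rw [Finset.mem_powerset] at hFE
  have hne : x ≠ y := fun h => hy (h ▸ hx)
  obtain ⟨u, v, huv, hu, hv⟩ := ((reflTransGen_iff_eq_or_transGen.1 hFxy).resolve_left
    hne.symm).exists_rel_of_forall (p := (· ∈ S)) (q := (· ∉ S)) hx hy fun u _ _ => em _
  obtain ⟨e, heF, hcross⟩ : ∃ e ∈ F, e.1 ∈ S ∧ e.2 ∉ S ∨ e.2 ∈ S ∧ e.1 ∉ S := by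
    rcases huv with (h | h) | ⟨hu', -⟩
    exacts [⟨_, h, Or.inl ⟨hu, hv⟩⟩, ⟨_, h, Or.inr ⟨hu, hv⟩⟩, absurd hu (hYS u hu')]
  have hmin : ¬ ReflTransGen (contractAdj (F.erase e) Y) x y := fun h =>
    (Finset.card_erase_lt_of_mem heF).not_ge <| hFmin _ <| Finset.mem_filter.2
      ⟨Finset.mem_powerset.2 ((Finset.erase_subset e F).trans hFE), h⟩
  have hbridge : ReflTransGen (withEdge (contractAdj (E.erase e) Y) x y) e.1 e.2 :=
    ReflTransGen.mono (withEdge_mono (contractAdj_mono (Finset.erase_subset_erase e hFE) Y) x y) _ _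
      (reflTransGen_withEdge_exchange
        (ReflTransGen.mono (contractAdj_le_withEdge_erase F Y e) _ _ hFxy) hmin)
  exact ⟨e, hFE heF, hcross, reflTransGen_closed <| (contractAdj_le_withEdge_erase E Y e).trans
    (withEdge_le_reflTransGen (fun _ _ => Or.inl) hbridge)⟩

end Contraction

section Components

open Topology

variable {V : Type*} [PseudoMetricSpace V] {R : Finset V} {S : Set V} {t t' : ℝ} {a b s x y : V}

def thresholdAdj (R : Finset V) (t : ℝ) (a b : V) : Prop :=
  a ∈ R ∧ b ∈ R ∧ dist a b ≤ 2 * t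

instance (R : Finset V) (t : ℝ) : Std.Symm (thresholdAdj R t) where
  symm a b := fun ⟨ha, hb, h⟩ => ⟨hb, ha, dist_comm a b ▸ h⟩

def component (R : Finset V) (t : ℝ) (s : V) : Set V :=
  {s' | s' ∈ R ∧ ReflTransGen (thresholdAdj R t) s s'}

noncomputable def numComponents (R : Finset V) (t : ℝ) : ℕ :=
  Set.ncard {C : Set V | ∃ s ∈ R, C = component R t s}

noncomputable def connectionTime (R : Finset V) : ℝ :=
  sInf {t : ℝ | 0 ≤ t ∧ numComponents R t = 1}

noncomputable def deactTime (R : Finset V) (S : Set V) : ℝ :=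
  sSup {t : ℝ | 0 ≤ t ∧ ∃ s ∈ R, S = component R t s}

noncomputable def mergeTime (R : Finset V) (x y : V) : ℝ :=
  sInf {t : ℝ | 0 ≤ t ∧ y ∈ component R t x}

theorem thresholdAdj_mono (h : t ≤ t') : thresholdAdj R t ≤ thresholdAdj R t' :=
  fun _ _ ⟨ha, hb, hd⟩ => ⟨ha, hb, hd.trans (by linarith)⟩

theorem mem_component_self (hs : s ∈ R) (t : ℝ) : s ∈ component R t s :=
  ⟨hs, .refl⟩

theorem component_eq_of_mem (h : a ∈ component R t s) : component R t a = component R t s := by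
  ext z
  exact and_congr_right fun _ => ⟨h.2.trans, (symm h.2).trans⟩

theorem component_mono (h : t ≤ t') (s : V) : component R t s ⊆ component R t' s :=
  fun _ ⟨hz, hsz⟩ => ⟨hz, ReflTransGen.mono (thresholdAdj_mono h) _ _ hsz⟩

theorem component_laminar {s' z : V} (hz : z ∈ component R t s) (hz' : z ∈ component R t' s') :
    component R t s ⊆ component R t' s' ∨ component R t' s' ⊆ component R t s := by
  rw [← component_eq_of_mem hz, ← component_eq_of_mem hz']
  exact (le_total t t').imp (component_mono · z) (component_mono · z)

theorem two_mul_lt_dist (ha : a ∈ component R t s) (hb : b ∈ R) (hbS : b ∉ component R t s) :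
    2 * t < dist a b := by
  by_contra! h
  rw [← component_eq_of_mem ha] at hbS
  exact hbS ⟨hb, .single ⟨ha.1, hb, h⟩⟩

theorem two_mul_deactTime_le_dist (ha : a ∈ S) (hb : b ∈ R) (hbS : b ∉ S) :
    2 * deactTime R S ≤ dist a b := by
  suffices deactTime R S ≤ dist a b / 2 by linarith
  refine Real.sSup_le ?_ (by positivity)
  rintro t ⟨-, s, -, rfl⟩
  linarith [two_mul_lt_dist ha hb hbS]

/-- Only finitely many distances are involved, so the components are right-continuous in `t`. -/
theorem exists_gt_thresholdAdj_le (R : Finset V) (t : ℝ) :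
    ∃ t' > t, thresholdAdj R t' ≤ thresholdAdj R t := by
  have hnear : ∀ᶠ t' in 𝓝 t, ∀ p ∈ R ×ˢ R, 2 * t < dist p.1 p.2 → 2 * t' < dist p.1 p.2 := by
    refine (Filter.eventually_all_finset _).2 fun p _ => ?_
    by_cases hp : 2 * t < dist p.1 p.2
    · exact (eventually_lt_nhds (show t < dist p.1 p.2 / 2 by linarith)).mono
        fun t' ht' _ => by linarith
    · exact .of_forall fun _ h => absurd h hp
  obtain ⟨t', ht', hgt⟩ := ((hnear.filter_mono nhdsWithin_le_nhds).and self_mem_nhdsWithin).exists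
    (f := 𝓝[>] t)
  refine ⟨t', hgt, fun a b ⟨ha, hb, hd⟩ => ⟨ha, hb, ?_⟩⟩
  by_contra! h
  exact (ht' (a, b) (Finset.mem_product.2 ⟨ha, hb⟩) h).not_ge hd

theorem mergeTime_nonneg (R : Finset V) (x y : V) : 0 ≤ mergeTime R x y :=
  Real.sInf_nonneg fun _ h => h.1

theorem mergeTime_le (ht : 0 ≤ t) (h : y ∈ component R t x) : mergeTime R x y ≤ t :=
  csInf_le ⟨0, fun _ h => h.1⟩ ⟨ht, h⟩

theorem mem_component_mergeTime (hx : x ∈ R) (hy : y ∈ R) :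
    y ∈ component R (mergeTime R x y) x := by
  obtain ⟨t', ht', hle⟩ := exists_gt_thresholdAdj_le R (mergeTime R x y)
  obtain ⟨t₁, ⟨-, ht₁⟩, ht₁t'⟩ := (csInf_lt_iff (s := {t | 0 ≤ t ∧ y ∈ component R t x})
    ⟨0, fun _ h => h.1⟩ ⟨dist x y / 2, by positivity, hy, .single ⟨hx, hy, by linarith⟩⟩).1 ht'
  exact ⟨hy, ReflTransGen.mono hle _ _ (component_mono ht₁t'.le x ht₁).2⟩

theorem exists_numComponents_eq_one (hR : R.Nonempty) :
    ∃ t, 0 ≤ t ∧ numComponents R t = 1 := by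
  set t := ∑ p ∈ R ×ˢ R, dist p.1 p.2
  have hdist : ∀ a ∈ R, ∀ b ∈ R, dist a b ≤ 2 * t := fun a ha b hb => by
    have := Finset.single_le_sum (f := fun p : V × V => dist p.1 p.2) (fun _ _ => dist_nonneg)
      (a := (a, b)) (Finset.mem_product.2 ⟨ha, hb⟩)
    linarith [dist_nonneg (x := a) (y := b)]
  have hall : ∀ s ∈ R, component R t s = R := fun s hs => Set.Subset.antisymm (fun _ h => h.1)
    fun z (hz : z ∈ R) => ⟨hz, .single ⟨hs, hz, hdist s hs z hz⟩⟩
  refine ⟨t, Finset.sum_nonneg fun _ _ => dist_nonneg, Set.ncard_eq_one.2 ⟨R, ?_⟩⟩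
  ext C
  refine ⟨fun ⟨s, hs, hC⟩ => hC.trans (hall s hs), fun hC => ?_⟩
  obtain ⟨s, hs⟩ := hR
  exact ⟨s, hs, hC.trans (hall s hs).symm⟩

theorem mergeTime_le_connectionTime (hx : x ∈ R) (hy : y ∈ R) :
    mergeTime R x y ≤ connectionTime R := by
  refine le_csInf (exists_numComponents_eq_one ⟨x, hx⟩) fun t ⟨ht, h1⟩ => mergeTime_le ht ?_
  obtain ⟨C, hC⟩ := Set.ncard_eq_one.1 h1
  have hall : ∀ s ∈ R, component R t s = C := fun s hs => hC.subset ⟨s, hs, rfl⟩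
  exact hall x hx ▸ hall y hy ▸ mem_component_self hy t

/-- The component of `s` grows with `t` inside the finite set `R`; where its size is maximal
on `[a, b)` it stops growing. -/
theorem exists_component_eq_on_Ico (R : Finset V) (s : V) {a b : ℝ} (hab : a < b) :
    ∃ u ∈ Set.Ico a b, ∀ u' ∈ Set.Ico u b, component R u' s = component R u s := by
  set sizes := (fun u => (component R u s).ncard) '' Set.Ico a b
  have hbdd : BddAbove sizes := ⟨R.card, by
    rintro _ ⟨u, -, rfl⟩
    simpa using Set.ncard_le_ncard (fun _ h => h.1 : component R u s ⊆ R)⟩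
  obtain ⟨u, hu, hmax⟩ := Nat.sSup_mem ⟨_, Set.mem_image_of_mem _ (Set.left_mem_Ico.2 hab)⟩ hbdd
  refine ⟨u, hu, fun u' hu' => (Set.eq_of_subset_of_ncard_le (component_mono hu'.1 s) ?_
    ((R.finite_toSet).subset fun _ h => h.1)).symm⟩
  exact (le_csSup hbdd ⟨u', ⟨hu.1.trans hu'.1, hu'.2⟩, rfl⟩).trans_eq hmax.symm

end Components

section ContractedMst

variable {V : Type*} [PseudoMetricSpace V]

def Spans (R Y : Finset V) (E : Finset (V × V)) : Prop :=
  ∀ s₁ ∈ R, ∀ s₂ ∈ R, ReflTransGen (contractAdj E Y) s₁ s₂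

def spanCosts (R Y : Finset V) : Set ℝ :=
  {v | ∃ E : Finset (V × V), (∀ e ∈ E, e.1 ∈ R ∧ e.2 ∈ R) ∧ Spans R Y E ∧
    v = ∑ e ∈ E, dist e.1 e.2}

noncomputable def contractedMstCost (R Y : Finset V) : ℝ :=
  sInf (spanCosts R Y)

theorem isLeast_contractedMstCost (R Y : Finset V) :
    IsLeast (spanCosts R Y) (contractedMstCost R Y) := by
  have hfin : (spanCosts R Y).Finite := by
    refine ((R ×ˢ R).powerset.finite_toSet.image fun E => ∑ e ∈ E, dist e.1 e.2).subset ?_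
    rintro _ ⟨E, hER, -, rfl⟩
    exact ⟨E, Finset.mem_powerset.2 fun e he => Finset.mem_product.2 (hER e he), rfl⟩
  have hne : (spanCosts R Y).Nonempty := ⟨_, R ×ˢ R, fun _ => Finset.mem_product.1,
    fun s₁ h₁ s₂ h₂ => .single (Or.inl (Or.inl (Finset.mem_product.2 ⟨h₁, h₂⟩))), rfl⟩
  exact ⟨hne.csInf_mem hfin, fun _ hv => csInf_le hfin.bddBelow hv⟩

theorem contractedMstCost_le {R Y : Finset V} {E : Finset (V × V)}
    (hER : ∀ e ∈ E, e.1 ∈ R ∧ e.2 ∈ R) (hE : Spans R Y E) :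
    contractedMstCost R Y ≤ ∑ e ∈ E, dist e.1 e.2 :=
  (isLeast_contractedMstCost R Y).2 ⟨E, hER, hE, rfl⟩

theorem spanCosts_of_card_le_one (R : Finset V) {Y : Finset V} (hY : Y.card ≤ 1) :
    spanCosts R Y = {v | ∃ E : Finset (V × V), (∀ e ∈ E, e.1 ∈ R ∧ e.2 ∈ R) ∧
      (∀ s₁ ∈ R, ∀ s₂ ∈ R, ReflTransGen (symmAdj E) s₁ s₂) ∧ v = ∑ e ∈ E, dist e.1 e.2} := by
  simp only [spanCosts, Spans, reflTransGen_contractAdj_of_subsingleton _ hY]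

theorem contractedMstCost_of_card_le_one (R : Finset V) {Y : Finset V} (hY : Y.card ≤ 1) :
    contractedMstCost R Y = contractedMstCost R ∅ := by
  rw [contractedMstCost, contractedMstCost, spanCosts_of_card_le_one R hY,
    spanCosts_of_card_le_one R (Finset.card_empty.trans_le zero_le_one)]

variable [DecidableEq V]

/-- An edge crossing `S` is at least `2 d^S` long and, once `x` is merged into the contracted
set, one such edge becomes redundant. -/
theorem contractedMstCost_add_two_mul_deactTime_le {R Y : Finset V} {S : Set V} {x y : V}
    (hYR : Y ⊆ R) (hx : x ∈ Y) (hy : y ∈ Y) (hxy : x ≠ y) (hxS : x ∈ S)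
    (hYS : ∀ z ∈ Y, z ∈ S → z = x) :
    contractedMstCost R Y + 2 * deactTime R S ≤ contractedMstCost R (Y.erase x) := by
  obtain ⟨E, hER, hE, hcost⟩ := (isLeast_contractedMstCost R (Y.erase x)).1
  obtain ⟨e, heE, hcross, hle⟩ := exists_crossing_edge_exchange E
    (fun z hz hzS => Finset.ne_of_mem_erase hz (hYS z (Finset.mem_of_mem_erase hz) hzS)) hxS
    (fun hyS => hxy (hYS y hy hyS).symm) (hE x (hYR hx) y (hYR hy))
  have hspan : Spans R Y (E.erase e) := fun s₁ h₁ s₂ h₂ =>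
    ReflTransGen.mono (withEdge_contractAdj_erase_le _ hx hy) _ _ (hle _ _ (hE s₁ h₁ s₂ h₂))
  have hdist : 2 * deactTime R S ≤ dist e.1 e.2 := by
    rcases hcross with ⟨h1, h2⟩ | ⟨h1, h2⟩
    · exact two_mul_deactTime_le_dist h1 (hER e heE).2 h2
    · exact dist_comm e.1 e.2 ▸ two_mul_deactTime_le_dist h1 (hER e heE).1 h2
  calc contractedMstCost R Y + 2 * deactTime R S
      ≤ ∑ e' ∈ E.erase e, dist e'.1 e'.2 + dist e.1 e.2 :=
        add_le_add (contractedMstCost_le (fun e' he' => hER e' (Finset.mem_of_mem_erase he'))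
          hspan) hdist
    _ = contractedMstCost R (Y.erase x) := by rw [Finset.sum_erase_add _ _ heE, hcost]

/-- A chain from `x` to `y` with steps of length at most `2τ` contains one step joining the
part attached to `x` to the part attached to `y`; adding it releases `x` from contraction. -/
theorem contractedMstCost_erase_le {R Y : Finset V} {x y : V} {τ : ℝ} (hxR : x ∈ R) (hy : y ∈ Y)
    (hxy : x ≠ y) (hchain : ReflTransGen (thresholdAdj R τ) x y) :
    contractedMstCost R (Y.erase x) ≤ contractedMstCost R Y + 2 * τ := by
  obtain ⟨E, hER, hE, hcost⟩ := (isLeast_contractedMstCost R Y).1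
  have hsplit : ∀ z ∈ R, ReflTransGen (contractAdj E (Y.erase x)) x z ∨
      ReflTransGen (contractAdj E (Y.erase x)) y z := fun z hz =>
    (reflTransGen_withEdge (reflTransGen_closed (contractAdj_le_reflTransGen_withEdge E hy hxy) _ _
      (hE x hxR z hz))).elim Or.inl fun h => h.2.imp symm symm
  obtain ⟨c, d, ⟨hcR, hdR, hcd⟩, hc, hd⟩ :=
    ((reflTransGen_iff_eq_or_transGen.1 hchain).resolve_left hxy.symm).exists_rel_of_forall
      .refl .refl fun u _ h => hsplit u h.1
  have lift := ReflTransGen.mono (contractAdj_mono (Finset.subset_insert (c, d) E) (Y.erase x))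
  have hxy' : ReflTransGen (contractAdj (insert (c, d) E) (Y.erase x)) x y :=
    ((lift _ _ hc).tail (Or.inl (Or.inl (Finset.mem_insert_self _ _)))).trans (symm (lift _ _ hd))
  have hspan : Spans R (Y.erase x) (insert (c, d) E) := fun s₁ h₁ s₂ h₂ =>
    reflTransGen_closed (withEdge_le_reflTransGen (contractAdj_mono (Finset.subset_insert _ _) _)
      hxy') _ _ (reflTransGen_closed (contractAdj_le_reflTransGen_withEdge E hy hxy) _ _
        (hE s₁ h₁ s₂ h₂))
  have hER' : ∀ e ∈ insert (c, d) E, e.1 ∈ R ∧ e.2 ∈ R := fun e he =>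
    (Finset.mem_insert.1 he).elim (fun h => h ▸ ⟨hcR, hdR⟩) (hER e)
  calc contractedMstCost R (Y.erase x) ≤ ∑ e ∈ insert (c, d) E, dist e.1 e.2 :=
        contractedMstCost_le hER' hspan
    _ ≤ ∑ e ∈ E, dist e.1 e.2 + dist c d := by
      by_cases hmem : (c, d) ∈ E
      · rw [Finset.insert_eq_of_mem hmem]
        linarith [dist_nonneg (x := c) (y := d)]
      · rw [Finset.sum_insert hmem, add_comm]
    _ ≤ contractedMstCost R Y + 2 * τ := by linarith

end ContractedMst

section Certificates

variable {V : Type*} [PseudoMetricSpace V] [DecidableEq V]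

theorem contractedMstCost_add_two_mul_sum_deactTime_le {R X : Finset V} {cert : Finset (Set V)}
    (hXR : X ⊆ R) (hcert : ∀ S ∈ cert, ∃ t s, S = component R t s)
    (hcard : cert.card = X.card - 1) (hsep : Separates cert X) :
    contractedMstCost R X + 2 * ∑ S ∈ cert, deactTime R S ≤ contractedMstCost R ∅ := by
  induction X using Finset.strongInduction generalizing cert with
  | H X ih =>
  rcases le_or_gt X.card 1 with hX | hX
  · rw [Finset.card_eq_zero.1 (show cert.card = 0 by omega), contractedMstCost_of_card_le_one R hX]
    simp
  have hlam : ∀ S ∈ cert, ∀ T ∈ cert, ∀ z ∈ S, z ∈ T → S ⊆ T ∨ T ⊆ S := by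
    intro S hS T hT z hzS hzT
    obtain ⟨t, s, rfl⟩ := hcert S hS
    obtain ⟨t', s', rfl⟩ := hcert T hT
    exact component_laminar hzS hzT
  obtain ⟨S, hS, x, hx, hxS, hSX⟩ := hsep.exists_inter_eq_singleton hlam hX
  obtain ⟨y, hy, hyx⟩ := Finset.exists_mem_ne hX x
  have hstep := contractedMstCost_add_two_mul_deactTime_le hXR hx hy hyx.symm hxS hSX
  have hrest := ih (X.erase x) (Finset.erase_ssubset hx) ((Finset.erase_subset x X).trans hXR)
    (fun T hT => hcert T (Finset.mem_of_mem_erase hT))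
    (by rw [Finset.card_erase_of_mem hS, Finset.card_erase_of_mem hx, hcard])
    (hsep.erase hSX)
  rw [← Finset.add_sum_erase cert _ hS]
  linarith

end Certificates

section Construction

variable {V : Type*} [MetricSpace V] {R : Finset V} {s x y z : V}

theorem eq_of_mem_component_zero (h : z ∈ component R 0 s) : z = s := by
  have h' : ReflTransGen Eq s z := ReflTransGen.mono
    (fun a b hab => dist_le_zero.1 (by linarith [hab.2.2])) _ _ h.2
  rw [reflTransGen_eq_self] at h'
  exact h'.symm

theorem mergeTime_pos (hx : x ∈ R) (hy : y ∈ R) (hxy : x ≠ y) : 0 < mergeTime R x y :=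
  (mergeTime_nonneg R x y).lt_of_ne fun h =>
    hxy (eq_of_mem_component_zero (h ▸ mem_component_mergeTime hx hy)).symm

/-- Just before `x` and `y` merge, the component of `x` is stable, so it stays a component
up to the merge time. -/
theorem exists_lt_mergeTime_le_deactTime (hx : x ∈ R) (hy : y ∈ R) (hxy : x ≠ y) :
    ∃ u, 0 ≤ u ∧ u < mergeTime R x y ∧ mergeTime R x y ≤ deactTime R (component R u x) := by
  obtain ⟨u, ⟨hu0, huτ⟩, hconst⟩ := exists_component_eq_on_Ico R x (mergeTime_pos hx hy hxy)
  refine ⟨u, hu0, huτ, ?_⟩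
  have hyS : y ∉ component R u x := fun h => huτ.not_ge (mergeTime_le hu0 h)
  have hbdd : BddAbove {t | 0 ≤ t ∧ ∃ s ∈ R, component R u x = component R t s} := by
    refine ⟨dist x y / 2, ?_⟩
    rintro t ⟨-, s, -, hS⟩
    linarith [two_mul_lt_dist (hS ▸ mem_component_self hx u) hy (hS ▸ hyS)]
  rw [← csSup_Ico huτ]
  exact csSup_le_csSup hbdd (Set.nonempty_Ico.2 huτ)
    fun t ht => ⟨hu0.trans ht.1, x, hx, (hconst t ht).symm⟩

variable [DecidableEq V]

/-- The component of `x` just before its merge with the nearest other terminal `y`. -/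
theorem exists_isolating_component {X : Finset V} (hXR : X ⊆ R) (hX : 1 < X.card) :
    ∃ x ∈ X, ∃ S : Set V, (∃ t, 0 ≤ t ∧ t < connectionTime R ∧ ∃ s ∈ R, S = component R t s) ∧
      x ∈ S ∧ (∀ z ∈ X, z ∈ S → z = x) ∧
      contractedMstCost R (X.erase x) ≤ contractedMstCost R X + 2 * deactTime R S := by
  obtain ⟨a, ha, b, hb, hab⟩ := Finset.one_lt_card.1 hX
  obtain ⟨⟨x, y⟩, hxy, hmin⟩ := X.offDiag.exists_min_image (fun p => mergeTime R p.1 p.2)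
    ⟨(a, b), Finset.mem_offDiag.2 ⟨ha, hb, hab⟩⟩
  obtain ⟨hx, hy, hne⟩ := Finset.mem_offDiag.1 hxy
  obtain ⟨u, hu0, huτ, hτS⟩ := exists_lt_mergeTime_le_deactTime (hXR hx) (hXR hy) hne
  refine ⟨x, hx, component R u x, ⟨u, hu0, ?_, x, hXR hx, rfl⟩, mem_component_self (hXR hx) u,
    fun z hz hzS => by_contra fun hzx => ?_, ?_⟩
  · exact huτ.trans_le (mergeTime_le_connectionTime (hXR hx) (hXR hy))
  · exact (huτ.trans_le (hmin (x, z) (Finset.mem_offDiag.2 ⟨hx, hz, Ne.symm hzx⟩))).not_ge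
      (mergeTime_le hu0 hzS)
  · linarith [contractedMstCost_erase_le (hXR hx) hy hne
      (mem_component_mergeTime (hXR hx) (hXR hy)).2]

theorem exists_certificate {X : Finset V} (hXR : X ⊆ R) :
    ∃ cert : Finset (Set V),
      (∀ S ∈ cert, ∃ t, 0 ≤ t ∧ t < connectionTime R ∧ ∃ s ∈ R, S = component R t s) ∧
      cert.card = X.card - 1 ∧ Separates cert X ∧ (∀ S ∈ cert, ∃ z ∈ X, z ∈ S) ∧
      contractedMstCost R ∅ ≤ contractedMstCost R X + 2 * ∑ S ∈ cert, deactTime R S := by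
  induction X using Finset.strongInduction with
  | H X ih =>
  rcases le_or_gt X.card 1 with hX | hX
  · refine ⟨∅, by simp, by simp; omega, fun s₁ h₁ s₂ h₂ h => ?_, by simp, ?_⟩
    · exact absurd (Finset.card_le_one.1 hX s₁ h₁ s₂ h₂) h
    · simp [contractedMstCost_of_card_le_one R hX]
  obtain ⟨x, hx, S, hScomp, hxS, hSX, hstep⟩ := exists_isolating_component hXR hX
  obtain ⟨cert, hcomp, hcard, hsep, hmeet, hle⟩ :=
    ih (X.erase x) (Finset.erase_ssubset hx) ((Finset.erase_subset x X).trans hXR)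
  have hS : S ∉ cert := fun hS => by
    obtain ⟨z, hz, hzS⟩ := hmeet S hS
    exact Finset.ne_of_mem_erase hz (hSX z (Finset.mem_of_mem_erase hz) hzS)
  refine ⟨insert S cert, (Finset.forall_mem_insert _ _ _).2 ⟨hScomp, hcomp⟩, ?_,
    hsep.insert hxS hSX,
    (Finset.forall_mem_insert _ _ _).2 ⟨⟨x, hx, hxS⟩, fun T hT => ?_⟩, ?_⟩
  · rw [Finset.card_insert_of_notMem hS, hcard, Finset.card_erase_of_mem hx]
    omega
  · obtain ⟨z, hz, hzT⟩ := hmeet T hT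
    exact ⟨z, Finset.mem_of_mem_erase hz, hzT⟩
  · rw [Finset.sum_insert hS]
    linarith

end Construction

theorem stmt_13_general {V : Type*} [MetricSpace V]
    (R X : Finset V) (hXR : X ⊆ R)
    (comp : ℝ → V → Set V)
    (hcomp : ∀ t s, comp t s = {s' | s' ∈ R ∧
      Relation.ReflTransGen (fun a b => a ∈ R ∧ b ∈ R ∧ dist a b ≤ 2 * t) s s'})
    (ncomp : ℝ → ℕ)
    (hncomp : ∀ t, ncomp t = Set.ncard {C : Set V | ∃ s ∈ R, C = comp t s})
    (tmax : ℝ) (htmax : tmax = sInf {t : ℝ | 0 ≤ t ∧ ncomp t = 1})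
    (dS : Set V → ℝ)
    (hdS : ∀ S : Set V, dS S = sSup {t : ℝ | 0 ≤ t ∧ ∃ s ∈ R, S = comp t s})
    (mstCost : ℝ)
    (hmst : IsLeast { v : ℝ | ∃ E : Finset (V × V),
        (∀ e ∈ E, e.1 ∈ R ∧ e.2 ∈ R) ∧
        (∀ s₁ ∈ R, ∀ s₂ ∈ R, Relation.ReflTransGen
          (fun a b => (a, b) ∈ E ∨ (b, a) ∈ E) s₁ s₂) ∧
        v = ∑ e ∈ E, dist e.1 e.2 } mstCost)
    (mstCostX : ℝ)
    (hmstX : IsLeast { v : ℝ | ∃ E : Finset (V × V),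
        (∀ e ∈ E, e.1 ∈ R ∧ e.2 ∈ R) ∧
        (∀ s₁ ∈ R, ∀ s₂ ∈ R, Relation.ReflTransGen
          (fun a b => ((a, b) ∈ E ∨ (b, a) ∈ E) ∨ (a ∈ X ∧ b ∈ X)) s₁ s₂) ∧
        v = ∑ e ∈ E, dist e.1 e.2 } mstCostX) :
    IsGreatest { v : ℝ | ∃ cert : Finset (Set V),
        (∀ S ∈ cert, ∃ t : ℝ, 0 ≤ t ∧ t < tmax ∧ ∃ s ∈ R, S = comp t s) ∧
        cert.card = X.card - 1 ∧
        (∀ s₁ ∈ X, ∀ s₂ ∈ X, s₁ ≠ s₂ →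
          ∃ S ∈ cert, (s₁ ∈ S ∧ s₂ ∉ S) ∨ (s₂ ∈ S ∧ s₁ ∉ S)) ∧
        v = 2 * ∑ S ∈ cert, dS S } (mstCost - mstCostX) := by
  classical
  obtain rfl : comp = component R := funext₂ hcomp
  obtain rfl : ncomp = numComponents R := funext hncomp
  obtain rfl : dS = deactTime R := funext hdS
  obtain rfl : tmax = connectionTime R := htmax
  obtain rfl : mstCost = contractedMstCost R ∅ := hmst.unique <|
    spanCosts_of_card_le_one R (Finset.card_empty.trans_le zero_le_one) ▸
      isLeast_contractedMstCost R ∅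
  obtain rfl : mstCostX = contractedMstCost R X := hmstX.unique (isLeast_contractedMstCost R X)
  have upper {cert : Finset (Set V)}
      (hcert : ∀ S ∈ cert, ∃ t, 0 ≤ t ∧ t < connectionTime R ∧ ∃ s ∈ R, S = component R t s)
      (hcard : cert.card = X.card - 1) (hsep : Separates cert X) :=
    contractedMstCost_add_two_mul_sum_deactTime_le hXR
      (fun S hS => let ⟨t, _, _, s, _, h⟩ := hcert S hS; ⟨t, s, h⟩) hcard hsep
  obtain ⟨cert, hcert, hcard, hsep, -, hlower⟩ := exists_certificate hXR
  refine ⟨⟨cert, hcert, hcard, hsep, ?_⟩, ?_⟩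
  · linarith [upper hcert hcard hsep]
  · rintro v ⟨cert, hcert, hcard, hsep, rfl⟩
    linarith [upper hcert hcard hsep]

/-- drop(X) := mst(G[R]) − mst(G[R]/X) equals the maximum value 2·∑_{S ∈ cert} d^S over
all drop certificates cert for X; in particular every drop certificate value is a lower
bound on drop(X). -/
theorem stmt_13 {V : Type*} [MetricSpace V] [Fintype V]
    (R X : Finset V) (hXR : X ⊆ R) (hX : X.Nonempty)
    (comp : ℝ → V → Set V)
    (hcomp : ∀ t s, comp t s = {s' | s' ∈ R ∧
      Relation.ReflTransGen (fun a b => a ∈ R ∧ b ∈ R ∧ dist a b ≤ 2 * t) s s'})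
    (ncomp : ℝ → ℕ)
    (hncomp : ∀ t, ncomp t = Set.ncard {C : Set V | ∃ s ∈ R, C = comp t s})
    (tmax : ℝ) (htmax : tmax = sInf {t : ℝ | 0 ≤ t ∧ ncomp t = 1})
    (dS : Set V → ℝ)
    (hdS : ∀ S : Set V, dS S = sSup {t : ℝ | 0 ≤ t ∧ ∃ s ∈ R, S = comp t s})
    (mstCost : ℝ)
    (hmst : IsLeast { v : ℝ | ∃ E : Finset (V × V),
        (∀ e ∈ E, e.1 ∈ R ∧ e.2 ∈ R) ∧
        (∀ s₁ ∈ R, ∀ s₂ ∈ R, Relation.ReflTransGen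
          (fun a b => (a, b) ∈ E ∨ (b, a) ∈ E) s₁ s₂) ∧
        v = ∑ e ∈ E, dist e.1 e.2 } mstCost)
    (mstCostX : ℝ)
    (hmstX : IsLeast { v : ℝ | ∃ E : Finset (V × V),
        (∀ e ∈ E, e.1 ∈ R ∧ e.2 ∈ R) ∧
        (∀ s₁ ∈ R, ∀ s₂ ∈ R, Relation.ReflTransGen
          (fun a b => ((a, b) ∈ E ∨ (b, a) ∈ E) ∨ (a ∈ X ∧ b ∈ X)) s₁ s₂) ∧
        v = ∑ e ∈ E, dist e.1 e.2 } mstCostX) :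
    IsGreatest { v : ℝ | ∃ cert : Finset (Set V),
        (∀ S ∈ cert, ∃ t : ℝ, 0 ≤ t ∧ t < tmax ∧ ∃ s ∈ R, S = comp t s) ∧
        cert.card = X.card - 1 ∧
        (∀ s₁ ∈ X, ∀ s₂ ∈ X, s₁ ≠ s₂ →
          ∃ S ∈ cert, (s₁ ∈ S ∧ s₂ ∉ S) ∨ (s₂ ∈ S ∧ s₁ ∉ S)) ∧
        v = 2 * ∑ S ∈ cert, dS S } (mstCost - mstCostX) :=
  stmt_13_general R X hXR comp hcomp ncomp hncomp tmax htmax dS hdS mstCost hmst mstCostX hmstX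
end

section
/- Let 𝒞 be a laminar family of nonempty sets, none containing a fixed element s*, equipped with a function m : 𝒞 → ℝ>0 such that (i) nested sets have equal m-value, and (ii) disjoint sets have m-values differing by a factor more than M > 1. Then 𝒞 can be partitioned into chains 𝒞¹, …, 𝒞ᵏ (each totally ordered by inclusion) such that for any Sᵢ ∈ 𝒞ⁱ and Sⱼ ∈ 𝒞ʲ with i < j, the sets Sᵢ and Sⱼ are disjoint and m(Sⱼ) > M·m(Sᵢ). -/
/-- The chain-structure lemma: a laminar family 𝒞 of nonempty sets avoiding s*, with a
positive value function m that is constant on nested pairs and differs by a factor more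
than M > 1 on disjoint pairs, can be partitioned into chains 𝒞¹, …, 𝒞ᵏ such that sets in
distinct chains are disjoint and later chains have m-value more than M times larger. -/
theorem stmt_19 {α : Type*} (sstar : α) (𝒞 : Finset (Set α)) (M : ℝ) (hM : 1 < M)
    (m : Set α → ℝ)
    (hne : ∀ S ∈ 𝒞, S.Nonempty) (hs : ∀ S ∈ 𝒞, sstar ∉ S)
    (hlam : ∀ A ∈ 𝒞, ∀ B ∈ 𝒞, A ⊆ B ∨ B ⊆ A ∨ A ∩ B = ∅)
    (hpos : ∀ S ∈ 𝒞, 0 < m S)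
    (hnested : ∀ A ∈ 𝒞, ∀ B ∈ 𝒞, A ⊆ B → m A = m B)
    (hdisj : ∀ A ∈ 𝒞, ∀ B ∈ 𝒞, A ∩ B = ∅ → m A ≤ m B → M * m A < m B) :
    ∃ (k : ℕ) (C : Fin k → Finset (Set α)),
      (∀ S ∈ 𝒞, ∃! i : Fin k, S ∈ C i) ∧
      (∀ i : Fin k, ∀ S ∈ C i, S ∈ 𝒞) ∧
      (∀ i : Fin k, ∀ A ∈ C i, ∀ B ∈ C i, A ⊆ B ∨ B ⊆ A) ∧
      (∀ i j : Fin k, i < j → ∀ A ∈ C i, ∀ B ∈ C j, A ∩ B = ∅ ∧ M * m A < m B) := by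
  classical
  set V : Finset ℝ := 𝒞.image m with hV
  set e := V.orderIsoOfFin rfl with he
  refine ⟨V.card, fun i => 𝒞.filter (fun S => m S = (e i : ℝ)), ?_, ?_, ?_, ?_⟩
  · intro S hS
    have hmem : m S ∈ V := Finset.mem_image_of_mem m hS
    refine ⟨e.symm ⟨m S, hmem⟩, ?_, ?_⟩
    · simp [hS]
    · intro j hj
      have hj' : m S = (e j : ℝ) := (Finset.mem_filter.1 hj).2
      have : e j = ⟨m S, hmem⟩ := Subtype.ext hj'.symm
      rw [← this, OrderIso.symm_apply_apply]
  · intro i S hS; exact (Finset.mem_filter.1 hS).1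
  · intro i A hA B hB
    obtain ⟨hA, hAm⟩ := Finset.mem_filter.1 hA
    obtain ⟨hB, hBm⟩ := Finset.mem_filter.1 hB
    have hmAB : m A = m B := by rw [hAm, hBm]
    rcases hlam A hA B hB with h | h | h
    · exact Or.inl h
    · exact Or.inr h
    · exfalso
      have := hdisj A hA B hB h (le_of_eq hmAB)
      nlinarith [hpos A hA]
  · intro i j hij A hA B hB
    obtain ⟨hA, hAm⟩ := Finset.mem_filter.1 hA
    obtain ⟨hB, hBm⟩ := Finset.mem_filter.1 hB
    have hlt : m A < m B := by
      rw [hAm, hBm]; exact_mod_cast e.strictMono hij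
    have hd : A ∩ B = ∅ := by
      rcases hlam A hA B hB with h | h | h
      · exact absurd (hnested A hA B hB h) (ne_of_lt hlt)
      · exact absurd (hnested B hB A hA h).symm (ne_of_lt hlt)
      · exact h
    exact ⟨hd, hdisj A hA B hB hd hlt.le⟩
end
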